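/- For every ε ∈ (0, T) one has lim_{Λ↓0} sup_{0 ≤ s ≤ T−ε} ‖ (1/(2Λ)) · ∫_s^T (L^Λ_{t,s})² dt − σ^{-1}/(4√A) ‖ = 0, where ‖·‖ is any matrix norm. -/

import Mathlib

open MeasureTheory ProbabilityTheory Matrix Filter

noncomputable section

/-- Matrix hyperbolic sine `sinh(M) = (exp M − exp(−M))/2`. -/
def sinhM {d : ℕ} (M : Matrix (Fin d) (Fin d) ℝ) : Matrix (Fin d) (Fin d) ℝ :=
  (2 : ℝ)⁻¹ • (NormedSpace.exp M - NormedSpace.exp (-M))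

/-- Matrix hyperbolic cosine `cosh(M) = (exp M + exp(−M))/2`. -/
def coshM {d : ℕ} (M : Matrix (Fin d) (Fin d) ℝ) : Matrix (Fin d) (Fin d) ℝ :=
  (2 : ℝ)⁻¹ • (NormedSpace.exp M + NormedSpace.exp (-M))

/-- `K^Λ_{t,s} = cosh(√A(T−t)σ/Λ) (sinh(√A(T−s)σ/Λ))⁻¹`. -/
def Kmat {d : ℕ} (T A : ℝ) (σ : Matrix (Fin d) (Fin d) ℝ) (Λ t s : ℝ) :
    Matrix (Fin d) (Fin d) ℝ :=
  coshM ((Real.sqrt A * (T - t) / Λ) • σ) * (sinhM ((Real.sqrt A * (T - s) / Λ) • σ))⁻¹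

/-- `L^Λ_{t,s} = sinh(√A(T−t)σ/Λ) (sinh(√A(T−s)σ/Λ))⁻¹`. -/
def Lmat {d : ℕ} (T A : ℝ) (σ : Matrix (Fin d) (Fin d) ℝ) (Λ t s : ℝ) :
    Matrix (Fin d) (Fin d) ℝ :=
  sinhM ((Real.sqrt A * (T - t) / Λ) • σ) * (sinhM ((Real.sqrt A * (T - s) / Λ) • σ))⁻¹

/-- Frobenius norm of a matrix. -/
def matNorm {d : ℕ} (M : Matrix (Fin d) (Fin d) ℝ) : ℝ :=
  Real.sqrt (∑ i, ∑ j, (M i j) ^ 2)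

/-!
Diagonalise `σ = U diag(λ) Uᵀ` with `U` orthogonal. Since `v ↦ U diag(v) Uᵀ` is an algebra
homomorphism that commutes with `exp`, entrywise integrals and inverses, all matrices in the
statement have this form and the problem splits into one scalar problem per eigenvalue `λ`:
with `x = √A λ (T - s) / Λ`,

  `(2Λ)⁻¹ ∫_s^T sinh²(√A λ (T - t) / Λ) / sinh² x dt - (4 √A λ)⁻¹`
  `  = (coth x - 1 - x / sinh² x) / (4 √A λ)`,

and `|coth x - 1 - x / sinh² x| ≤ 1 / x`. So the Frobenius norm is at most
`Λ ∑ₖ (4 A λₖ² ε)⁻¹` uniformly in `s ≤ T - ε`, which tends to `0`.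
-/

open Unitary Real

theorem sum_sum_sq_eq_trace_mul_conjTranspose {m n : Type*} [Fintype m] [Fintype n]
    (M : Matrix m n ℝ) : ∑ i, ∑ j, M i j ^ 2 = trace (M * Mᴴ) := by
  simp [trace, mul_apply, sq]

section ConjDiagonal

variable {n : Type*} [Fintype n] [DecidableEq n]

def conjDiagonal (u : unitaryGroup n ℝ) : (n → ℝ) →ₐ[ℝ] Matrix n n ℝ :=
  (AlgHomClass.toAlgHom (conjStarAlgAut ℝ _ u)).comp (diagonalAlgHom ℝ)

variable (u : unitaryGroup n ℝ)

theorem conjDiagonal_apply (v : n → ℝ) :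
    conjDiagonal u v = (u : Matrix n n ℝ) * diagonal v * star (u : Matrix n n ℝ) := rfl

theorem conjDiagonal_apply_apply (v : n → ℝ) (i j : n) :
    conjDiagonal u v i j = ∑ k, u i k * v k * u j k := by
  simp [conjDiagonal_apply, mul_apply, star_apply, diagonal_apply]

theorem exp_conjDiagonal (v : n → ℝ) :
    NormedSpace.exp (conjDiagonal u v) = conjDiagonal u (fun k => exp (v k)) := by
  have h : NormedSpace.exp (conjDiagonal u v) = conjDiagonal u (NormedSpace.exp v) := by
    rw [conjDiagonal_apply, conjDiagonal_apply, ← exp_diagonal]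
    exact Matrix.exp_units_conj (toUnits u) (diagonal v)
  rw [h]
  congr 1
  ext k
  rw [Pi.coe_exp, exp_eq_exp_ℝ]

theorem inv_conjDiagonal {v : n → ℝ} (hv : ∀ k, v k ≠ 0) :
    (conjDiagonal u v)⁻¹ = conjDiagonal u v⁻¹ := by
  refine inv_eq_right_inv ?_
  rw [← map_mul, show v * v⁻¹ = 1 from funext fun k => mul_inv_cancel₀ (hv k), map_one]

theorem trace_conjDiagonal (v : n → ℝ) : trace (conjDiagonal u v) = ∑ k, v k := by
  rw [conjDiagonal_apply, trace_mul_cycle, coe_star_mul_self, one_mul, trace_diagonal]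

theorem conjTranspose_conjDiagonal (v : n → ℝ) : (conjDiagonal u v)ᴴ = conjDiagonal u v := by
  simp [conjDiagonal_apply, mul_assoc, star_eq_conjTranspose]

theorem of_intervalIntegral_conjDiagonal {w : ℝ → n → ℝ} {a b : ℝ}
    (hw : ∀ k, IntervalIntegrable (fun t => w t k) volume a b) :
    Matrix.of (fun i j => ∫ t in a..b, conjDiagonal u (w t) i j)
      = conjDiagonal u (fun k => ∫ t in a..b, w t k) := by
  ext i j
  simp only [of_apply, conjDiagonal_apply_apply]
  rw [intervalIntegral.integral_finsetSum fun k _ => ((hw k).const_mul _).mul_const _]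
  simp only [intervalIntegral.integral_mul_const, intervalIntegral.integral_const_mul]

theorem Matrix.PosDef.exists_eq_conjDiagonal {σ : Matrix n n ℝ} (hσ : σ.PosDef) :
    ∃ u l, (∀ k, 0 < l k) ∧ σ = conjDiagonal u l :=
  ⟨hσ.1.eigenvectorUnitary, hσ.1.eigenvalues, hσ.eigenvalues_pos, by
    rw [conjDiagonal_apply]
    simpa [RCLike.ofReal_real_eq_id] using hσ.1.spectral_theorem⟩

end ConjDiagonal

section FinConjDiagonal

variable {d : ℕ} (u : unitaryGroup (Fin d) ℝ)

theorem sinhM_conjDiagonal (v : Fin d → ℝ) :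
    sinhM (conjDiagonal u v) = conjDiagonal u (fun k => sinh (v k)) := by
  rw [sinhM, ← map_neg, exp_conjDiagonal, exp_conjDiagonal, ← map_sub, ← map_smul]
  congr 1
  ext k
  simp only [Pi.smul_apply, Pi.sub_apply, Pi.neg_apply, smul_eq_mul, sinh_eq]
  ring

theorem matNorm_conjDiagonal (v : Fin d → ℝ) :
    matNorm (conjDiagonal u v) = √(∑ k, v k ^ 2) := by
  rw [matNorm, sum_sum_sq_eq_trace_mul_conjTranspose, conjTranspose_conjDiagonal, ← map_mul,
    trace_conjDiagonal]
  simp only [Pi.mul_apply, sq]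

theorem matNorm_conjDiagonal_le (v : Fin d → ℝ) :
    matNorm (conjDiagonal u v) ≤ ∑ k, |v k| := by
  rw [matNorm_conjDiagonal, sqrt_le_left (Finset.sum_nonneg fun k _ => abs_nonneg _)]
  simpa only [sq_abs] using Finset.sum_sq_le_sq_sum_of_nonneg fun k _ => abs_nonneg (v k)

end FinConjDiagonal

theorem integral_sinh_mul_sub_sq {b : ℝ} (hb : b ≠ 0) (s T : ℝ) :
    ∫ t in s..T, sinh (b * (T - t)) ^ 2
      = (sinh (b * (T - s)) * cosh (b * (T - s)) - b * (T - s)) / (2 * b) := by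
  have hderiv : ∀ t ∈ Set.uIcc s T, HasDerivAt
      (fun t => (b * (T - t) - sinh (b * (T - t)) * cosh (b * (T - t))) / (2 * b))
      (sinh (b * (T - t)) ^ 2) t := by
    intro t _
    have hlin : HasDerivAt (fun t : ℝ => b * (T - t)) (-b) t := by
      simpa using ((hasDerivAt_id t).const_sub T).const_mul b
    refine ((hlin.sub (hlin.sinh.mul hlin.cosh)).div_const (2 * b)).congr_deriv ?_
    rw [div_eq_iff (mul_ne_zero two_ne_zero hb)]
    linear_combination b * cosh_sq (b * (T - t))
  rw [intervalIntegral.integral_eq_sub_of_hasDerivAt hderiv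
    ((by fun_prop : Continuous fun t => sinh (b * (T - t)) ^ 2).intervalIntegrable s T)]
  simp only [sub_self, mul_zero, sinh_zero, zero_mul]
  ring

theorem abs_sinh_mul_cosh_sub_div_sinh_sq_sub_one_le {x : ℝ} (hx : 0 < x) :
    |(sinh x * cosh x - x) / sinh x ^ 2 - 1| ≤ x⁻¹ := by
  have hxs : x ≤ sinh x := self_le_sinh_iff.mpr hx.le
  have hs : 0 < sinh x := hx.trans_le hxs
  have hrem : sinh x * cosh x - sinh x ^ 2 = (1 - exp (-(2 * x))) / 2 := by
    have h1 : exp x * exp (-x) = 1 := by rw [← exp_add, add_neg_cancel, exp_zero]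
    have h2 : exp (-x) * exp (-x) = exp (-(2 * x)) := by rw [← exp_add]; ring_nf
    rw [sinh_eq, cosh_eq]
    linear_combination h1 / 2 - h2 / 2
  have hrem0 : 0 ≤ 1 - exp (-(2 * x)) := by
    simp only [sub_nonneg, exp_le_one_iff, neg_nonpos]; positivity
  have hremx : 1 - exp (-(2 * x)) ≤ 2 * x := by linarith [add_one_le_exp (-(2 * x))]
  have hsq : x * x ≤ sinh x ^ 2 := by nlinarith
  rw [div_sub_one (pow_pos hs 2).ne', abs_div, abs_of_pos (pow_pos hs 2),
    div_le_iff₀ (pow_pos hs 2), abs_le]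
  constructor <;> nlinarith [inv_mul_cancel₀ hx.ne', inv_pos.mpr hx]

theorem abs_half_inv_mul_integral_sinh_ratio_sq_sub_le {a l Λ s T : ℝ} (ha : 0 < a)
    (hl : 0 < l) (hΛ : 0 < Λ) (hs : s < T) :
    |(2 * Λ)⁻¹ * (∫ t in s..T,
        (sinh (a * (T - t) / Λ * l) * (sinh (a * (T - s) / Λ * l))⁻¹) ^ 2)
      - (4 * a)⁻¹ * l⁻¹| ≤ Λ / (4 * a ^ 2 * l ^ 2 * (T - s)) := by
  set b := a * l / Λ with hb_def
  have hb : 0 < b := by positivity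
  set x := b * (T - s) with hx_def
  have hx : 0 < x := mul_pos hb (sub_pos.mpr hs)
  have hintegral :
      ∫ t in s..T, (sinh (a * (T - t) / Λ * l) * (sinh (a * (T - s) / Λ * l))⁻¹) ^ 2
      = (sinh x * cosh x - x) / (2 * b) / sinh x ^ 2 := by
    have harg : ∀ t, a * (T - t) / Λ * l = b * (T - t) := fun t => by rw [hb_def]; ring
    simp only [harg, mul_pow, inv_pow]
    rw [intervalIntegral.integral_mul_const, integral_sinh_mul_sub_sq hb.ne']
    rfl
  have hrewrite :
      (2 * Λ)⁻¹ * ((sinh x * cosh x - x) / (2 * b) / sinh x ^ 2) - (4 * a)⁻¹ * l⁻¹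
      = (4 * a * l)⁻¹ * ((sinh x * cosh x - x) / sinh x ^ 2 - 1) := by
    rw [hb_def]
    field_simp
    ring
  rw [hintegral, hrewrite, abs_mul, abs_of_pos (by positivity)]
  calc (4 * a * l)⁻¹ * |(sinh x * cosh x - x) / sinh x ^ 2 - 1|
      ≤ (4 * a * l)⁻¹ * x⁻¹ := by
        gcongr
        exact abs_sinh_mul_cosh_sub_div_sinh_sq_sub_one_le hx
    _ = Λ / (4 * a ^ 2 * l ^ 2 * (T - s)) := by
        rw [hx_def, hb_def]
        field_simp

theorem Lmat_conjDiagonal {d : ℕ} (T A Λ t s : ℝ) (u : unitaryGroup (Fin d) ℝ)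
    {l : Fin d → ℝ}
    (hsinh : ∀ k, sinh (√A * (T - s) / Λ * l k) ≠ 0) :
    Lmat T A (conjDiagonal u l) Λ t s = conjDiagonal u
      (fun k => sinh (√A * (T - t) / Λ * l k) * (sinh (√A * (T - s) / Λ * l k))⁻¹) := by
  rw [Lmat, ← map_smul, ← map_smul, sinhM_conjDiagonal, sinhM_conjDiagonal]
  simp only [Pi.smul_apply, smul_eq_mul]
  rw [inv_conjDiagonal _ hsinh, ← map_mul]
  rfl

theorem matNorm_integral_Lmat_sq_sub_le {d : ℕ} {T A ε Λ s : ℝ} (u : unitaryGroup (Fin d) ℝ)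
    {l : Fin d → ℝ} (hl : ∀ k, 0 < l k) (hA : 0 < A) (hΛ : 0 < Λ) (hε : 0 < ε)
    (hs : s ≤ T - ε) :
    matNorm ((2 * Λ)⁻¹ • (Matrix.of fun i j => ∫ t in s..T,
        (Lmat T A (conjDiagonal u l) Λ t s * Lmat T A (conjDiagonal u l) Λ t s) i j)
      - (4 * √A)⁻¹ • (conjDiagonal u l)⁻¹)
      ≤ Λ * ∑ k, (4 * A * l k ^ 2 * ε)⁻¹ := by
  have hsT : 0 < T - s := by linarith
  have hsA : 0 < √A := sqrt_pos.mpr hA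
  set g : ℝ → Fin d → ℝ :=
    fun t k => sinh (√A * (T - t) / Λ * l k) * (sinh (√A * (T - s) / Λ * l k))⁻¹
  have hL (t : ℝ) : Lmat T A (conjDiagonal u l) Λ t s = conjDiagonal u (g t) :=
    Lmat_conjDiagonal T A Λ t s u fun k => (sinh_pos_iff.mpr (by have := hl k; positivity)).ne'
  have hintegral : (Matrix.of fun i j => ∫ t in s..T,
      (Lmat T A (conjDiagonal u l) Λ t s * Lmat T A (conjDiagonal u l) Λ t s) i j)
      = conjDiagonal u (fun k => ∫ t in s..T, g t k ^ 2) := by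
    simp only [sq]
    rw [← of_intervalIntegral_conjDiagonal u fun k =>
      (by fun_prop : Continuous fun t => g t k * g t k).intervalIntegrable _ _]
    congr! 3 with i j
    refine intervalIntegral.integral_congr fun t _ => ?_
    rw [hL, ← map_mul]
    rfl
  rw [hintegral, inv_conjDiagonal u (fun k => (hl k).ne'), ← map_smul, ← map_smul, ← map_sub]
  refine (matNorm_conjDiagonal_le u _).trans ?_
  rw [Finset.mul_sum]
  gcongr with k
  simp only [Pi.sub_apply, Pi.smul_apply, smul_eq_mul, Pi.inv_apply]
  refine (abs_half_inv_mul_integral_sinh_ratio_sq_sub_le hsA (hl k) hΛ (by linarith)).trans ?_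
  rw [sq_sqrt hA.le, ← div_eq_mul_inv]
  have := hl k
  gcongr
  linarith

theorem stmt10 (T : ℝ) {d : ℕ}
    (σ : Matrix (Fin d) (Fin d) ℝ) (hσ : σ.PosDef) (A : ℝ) (hA : 0 < A) :
    ∀ ε : ℝ, 0 < ε → ε < T →
      Tendsto (fun Λ : ℝ =>
          sSup {r | ∃ s : ℝ, 0 ≤ s ∧ s ≤ T - ε ∧
            r = matNorm ((2 * Λ)⁻¹ •
                  (Matrix.of fun i j =>
                    ∫ t in s..T, (Lmat T A σ Λ t s * Lmat T A σ Λ t s) i j)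
                - (4 * Real.sqrt A)⁻¹ • σ⁻¹)})
        (nhdsWithin 0 (Set.Ioi 0)) (nhds 0) := by
  intro ε hε _
  obtain ⟨u, l, hl, rfl⟩ := hσ.exists_eq_conjDiagonal
  set C := ∑ k, (4 * A * l k ^ 2 * ε)⁻¹
  have hC : 0 ≤ C := Finset.sum_nonneg fun k _ => by have := hl k; positivity
  have hlim : Tendsto (fun Λ : ℝ => Λ * C) (nhdsWithin 0 (Set.Ioi 0)) (nhds 0) := by
    simpa using ((continuous_mul_const C).tendsto 0).mono_left nhdsWithin_le_nhds
  refine squeeze_zero' (Eventually.of_forall fun Λ => Real.sSup_nonneg ?_) ?_ hlim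
  · rintro r ⟨s, -, -, rfl⟩
    exact Real.sqrt_nonneg _
  · filter_upwards [self_mem_nhdsWithin] with Λ hΛ
    refine Real.sSup_le ?_ (mul_nonneg hΛ.le hC)
    rintro r ⟨s, -, hs, rfl⟩
    exact matNorm_integral_Lmat_sq_sub_le u hl hA hΛ hε hs
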